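/- arXiv:2407.09910 — 3 statements merged into one kernel-verified Lean document; each statement's English description precedes it below -/
import Mathlib

section
/- Let G be a finite p-separable group, for a given prime p, and let B = b^G and C = c^G be non-central conjugacy classes of p-regular elements b, c of G with gcd(|B|,|C|) = 1. Then the product set BC = {b'c' : b' ∈ B, c' ∈ C} is itself a conjugacy class of G, namely BC = (bc)^G for suitable choices of representatives; it is a conjugacy class of a p-regular element, and 1 ≠ |BC| divides |B|·|C|. -/
open Pointwise

/-- A natural number `n` is a `π`-number if every prime dividing `n` lies in `π`. -/
def IsPiNumber (π : Set ℕ) (n : ℕ) : Prop := ∀ q : ℕ, q.Prime → q ∣ n → q ∈ π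

/-- The conjugacy class of an element `x` of a group `G`. -/
def conjClass (G : Type*) [Group G] (x : G) : Set G := {y : G | IsConj x y}

/-- A group `G` is `π`-separable if it has a normal series each of whose factors is
either a `π`-group or a `π'`-group. -/
def IsPiSeparable (π : Set ℕ) (G : Type*) [Group G] : Prop :=
  ∃ (n : ℕ) (H : Fin (n + 1) → Subgroup G), Monotone H ∧ H 0 = ⊥ ∧ H (Fin.last n) = ⊤ ∧
    ∀ i : Fin n, ((H i.castSucc).subgroupOf (H i.succ)).Normal ∧
      (IsPiNumber π (Nat.card (↥(H i.succ) ⧸ (H i.castSucc).subgroupOf (H i.succ))) ∨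
       IsPiNumber {q | q ∉ π} (Nat.card (↥(H i.succ) ⧸ (H i.castSucc).subgroupOf (H i.succ))))

/-- The set of conjugacy classes of non-central `p`-regular elements of `G`:
these are the vertices of the common divisor graph `Γ_p(G)`. -/
def pRegClasses (p : ℕ) (G : Type*) [Group G] : Set (Set G) :=
  {C | ∃ x : G, x ∉ Subgroup.center G ∧ ¬ p ∣ orderOf x ∧ C = conjClass G x}

/-- The common divisor graph `Γ_p(G)`: vertices are the conjugacy classes of non-central
`p`-regular elements, two distinct classes being adjacent iff their sizes are not coprime. -/
def pRegGraph (p : ℕ) (G : Type*) [Group G] : SimpleGraph ↥(pRegClasses p G) where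
  Adj A B := A ≠ B ∧ 1 < Nat.gcd (Nat.card ↥A.1) (Nat.card ↥B.1)
  symm := by
    constructor
    rintro A B ⟨h1, h2⟩
    exact ⟨h1.symm, by rwa [Nat.gcd_comm]⟩
  loopless := by constructor; rintro A ⟨h1, -⟩; exact h1 rfl

/-- The vertex of `Γ_p(G)` corresponding to a non-central `p`-regular element. -/
def vtx {p : ℕ} {G : Type*} [Group G] {x : G}
    (h1 : x ∉ Subgroup.center G) (h2 : ¬ p ∣ orderOf x) : ↥(pRegClasses p G) :=
  ⟨conjClass G x, x, h1, h2, rfl⟩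

/-- `H` is a Frobenius complement of the group `K`: it is a proper nontrivial subgroup
intersecting each of its conjugates trivially.  (`K` is then a Frobenius group.) -/
def IsFrobeniusCompl {K : Type*} [Group K] (H : Subgroup K) : Prop :=
  H ≠ ⊥ ∧ H ≠ ⊤ ∧ ∀ g : K, g ∉ H → H ⊓ H.map (MulAut.conj g).toMonoidHom = ⊥

/-- The Frobenius kernel of a Frobenius group `K` with complement `H`: the identity together
with the elements lying in no conjugate of `H`. -/
def frobKernel {K : Type*} [Group K] (H : Subgroup K) : Set K :=
  {x : K | x = 1 ∨ ∀ g : K, x ∉ H.map (MulAut.conj g).toMonoidHom}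

/-- `L` is quasi-Frobenius with abelian kernel and complements: `L / Z(L)` is a Frobenius
group, and the preimages in `L` of the Frobenius kernel and of a Frobenius complement of
`L / Z(L)` are abelian. -/
def IsQuasiFrobeniusAbelian (L : Type*) [Group L] : Prop :=
  ∃ H : Subgroup (L ⧸ Subgroup.center L), IsFrobeniusCompl H ∧
    (∀ a ∈ (QuotientGroup.mk ⁻¹' (H : Set (L ⧸ Subgroup.center L)) : Set L),
      ∀ b ∈ (QuotientGroup.mk ⁻¹' (H : Set (L ⧸ Subgroup.center L)) : Set L), a * b = b * a) ∧
    (∀ a ∈ (QuotientGroup.mk ⁻¹' frobKernel H : Set L),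
      ∀ b ∈ (QuotientGroup.mk ⁻¹' frobKernel H : Set L), a * b = b * a)

/-- The complements of a quasi-Frobenius group `L`: the preimages in `L` of the Frobenius
complements of `L / Z(L)`. -/
def quasiFrobComplements (L : Type*) [Group L] : Set (Set L) :=
  {C | ∃ H : Subgroup (L ⧸ Subgroup.center L), IsFrobeniusCompl H ∧
        C = (QuotientGroup.mk ⁻¹' (H : Set (L ⧸ Subgroup.center L)) : Set L)}

/-- `H` is a Hall `π`-subgroup of `G`: its order is a `π`-number and its index a `π'`-number. -/
def IsHall (π : Set ℕ) {G : Type*} [Group G] (H : Subgroup G) : Prop :=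
  IsPiNumber π (Nat.card ↥H) ∧ IsPiNumber {q | q ∉ π} H.index

/-- A `p`-complement of `G` is a Hall `p'`-subgroup. -/
def IsPComplement (p : ℕ) {G : Type*} [Group G] (H : Subgroup G) : Prop :=
  IsHall {q | q ≠ p} H

/-- `G` is `p`-nilpotent if it has a normal `p`-complement. -/
def IsPNilpotent (p : ℕ) (G : Type*) [Group G] : Prop :=
  ∃ N : Subgroup G, N.Normal ∧ IsPComplement p N

/-- `O_π(G)`, the largest normal `π`-subgroup of `G` (the subgroup generated by all
normal `π`-subgroups of `G`). -/
def piCore (π : Set ℕ) (G : Type*) [Group G] : Subgroup G :=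
  Subgroup.normalClosure {g : G | ∃ N : Subgroup G, N.Normal ∧ IsPiNumber π (Nat.card ↥N) ∧ g ∈ N}

instance piCore_normal (π : Set ℕ) (G : Type*) [Group G] : (piCore π G).Normal :=
  Subgroup.normalClosure_normal

instance piCore_comap_normal {G H : Type*} [Group G] [Group H] (f : G →* H) (π : Set ℕ) :
    ((piCore π H).comap f).Normal := (piCore_normal π H).comap f

set_option linter.unusedVariables false
set_option linter.unusedSectionVars false
set_option linter.unnecessarySimpa false
set_option maxHeartbeats 1000000
lemma IsPiNumber.of_dvd {π : Set ℕ} {m n : ℕ} (h : IsPiNumber π n) (hd : m ∣ n) :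
    IsPiNumber π m := fun q hq hqm => h q hq (hqm.trans hd)

lemma IsPiNumber.mul {π : Set ℕ} {m n : ℕ} (hm : IsPiNumber π m) (hn : IsPiNumber π n) :
    IsPiNumber π (m * n) := fun q hq hqm => ((hq.dvd_mul).mp hqm).elim (hm q hq) (hn q hq)

lemma IsPiNumber.one' {π : Set ℕ} : IsPiNumber π 1 := fun q hq hq1 =>
  absurd (Nat.dvd_one.mp hq1) hq.ne_one

lemma IsPiNumber.coprime {π : Set ℕ} {m n : ℕ} (hm : IsPiNumber π m)
    (hn : IsPiNumber {q | q ∉ π} n) : Nat.Coprime m n := by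
  by_contra h
  obtain ⟨q, hq, hqm, hqn⟩ := Nat.Prime.not_coprime_iff_dvd.mp h
  exact hn q hq hqn (hm q hq hqm)

lemma IsPiNumber.not_dvd_of_nmem {π : Set ℕ} {n p : ℕ} (h : IsPiNumber π n) (hp : p.Prime)
    (hmem : p ∉ π) : ¬ p ∣ n := fun hd => hmem (h p hp hd)

lemma normal_of_eq_ker {X Y : Type*} [Group X] [Group Y] (f : X →* Y) {A : Subgroup X}
    (h : A = f.ker) : A.Normal := h ▸ f.normal_ker

lemma card_quot_dvd_of_eq_ker {X Y : Type*} [Group X] [Group Y] (f : X →* Y) {A : Subgroup X}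
    (h : A = f.ker) : Nat.card (X ⧸ A) ∣ Nat.card Y := by
  subst h
  rw [Nat.card_congr (QuotientGroup.quotientKerEquivRange f).toEquiv]
  exact Subgroup.card_subgroup_dvd_card _

lemma card_quot_dvd_of_le_ker {X Y : Type*} [Group X] [Group Y] (f : X →* Y)
    (hf : Function.Surjective f) {A : Subgroup X} [A.Normal] (h : A ≤ f.ker) :
    Nat.card Y ∣ Nat.card (X ⧸ A) := by
  refine Subgroup.card_dvd_of_surjective (QuotientGroup.lift A f h) ?_
  intro y
  obtain ⟨x, rfl⟩ := hf y
  exact ⟨QuotientGroup.mk x, rfl⟩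

lemma IsPiSeparable.subgroup {π : Set ℕ} {G : Type*} [Group G] [Finite G]
    (h : IsPiSeparable π G) (K : Subgroup G) : IsPiSeparable π ↥K := by
  obtain ⟨n, H, hmono, hbot, htop, hstep⟩ := h
  refine ⟨n, fun i => (H i).subgroupOf K, fun i j hij => Subgroup.comap_mono (hmono hij),
    by show (H 0).subgroupOf K = ⊥; rw [hbot]; exact Subgroup.bot_subgroupOf K,
    by show (H (Fin.last n)).subgroupOf K = ⊤; rw [htop]; exact Subgroup.top_subgroupOf K, ?_⟩
  intro i
  obtain ⟨hn, hcard⟩ := hstep i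
  set A := H i.castSucc
  set B := H i.succ
  let ι : ↥(B.subgroupOf K) →* ↥B :=
    { toFun := fun x => ⟨↑(x : ↥K), x.2⟩, map_one' := rfl, map_mul' := fun _ _ => rfl }
  let Φ := (QuotientGroup.mk' (A.subgroupOf B)).comp ι
  have hker : (A.subgroupOf K).subgroupOf (B.subgroupOf K) = Φ.ker := by
    ext x
    simp [Φ, ι, Subgroup.mem_subgroupOf, MonoidHom.mem_ker, QuotientGroup.eq_one_iff]
  refine ⟨normal_of_eq_ker Φ hker, ?_⟩
  have hd := card_quot_dvd_of_eq_ker Φ hker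
  exact hcard.imp (fun h => h.of_dvd hd) (fun h => h.of_dvd hd)


section Quot
variable {π : Set ℕ} {G : Type*} [Group G] [Finite G]

lemma IsPiSeparable.quot (h : IsPiSeparable π G) (M : Subgroup G) [M.Normal] :
    IsPiSeparable π (G ⧸ M) := by
  obtain ⟨n, H, hmono, hbot, htop, hstep⟩ := h
  set f := QuotientGroup.mk' M with hfdef
  have hf : Function.Surjective f := QuotientGroup.mk'_surjective M
  refine ⟨n, fun i => (H i).map f, fun i j hij => Subgroup.map_mono (hmono hij),
    by show (H 0).map f = ⊥; rw [hbot]; exact Subgroup.map_bot f,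
    by show (H (Fin.last n)).map f = ⊤; rw [htop]; exact Subgroup.map_top_of_surjective f hf, ?_⟩
  intro i
  obtain ⟨hn, hcard⟩ := hstep i
  set A := H i.castSucc
  set B := H i.succ
  have hAB : A ≤ B := hmono (Fin.castSucc_le_succ i)
  have conj_mem : ∀ a ∈ A, ∀ b ∈ B, b * a * b⁻¹ ∈ A := by
    intro a ha b hb
    simpa [Subgroup.mem_subgroupOf] using
      hn.conj_mem ⟨a, hAB ha⟩ (Subgroup.mem_subgroupOf.mpr ha) ⟨b, hb⟩
  have hnormal : ((A.map f).subgroupOf (B.map f)).Normal := by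
    constructor
    rintro ⟨y, hyB⟩ hy g
    rw [Subgroup.mem_subgroupOf] at hy ⊢
    obtain ⟨a, ha, rfl⟩ := hy
    obtain ⟨b, hb, hbg⟩ := g.2
    have : (↑g : G ⧸ M) * f a * (↑g)⁻¹ = f (b * a * b⁻¹) := by
      rw [← hbg]; simp [mul_assoc]
    refine Subgroup.mem_map.mpr ⟨b * a * b⁻¹, conj_mem a ha b hb, ?_⟩
    rw [← this]; rfl
  refine ⟨hnormal, ?_⟩
  let ι : ↥B →* ↥(B.map f) :=
    { toFun := fun x => ⟨f ↑x, Subgroup.mem_map_of_mem f x.2⟩,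
      map_one' := by ext; simp, map_mul' := fun x y => by ext; simp }
  haveI := hnormal
  let Ψ : ↥B →* ↥(B.map f) ⧸ (A.map f).subgroupOf (B.map f) :=
    (QuotientGroup.mk' _).comp ι
  have hΨsurj : Function.Surjective Ψ := by
    intro q
    refine QuotientGroup.induction_on q ?_
    rintro ⟨y, hy⟩
    obtain ⟨b, hb, rfl⟩ := hy
    exact ⟨⟨b, hb⟩, rfl⟩
  have hle : A.subgroupOf B ≤ Ψ.ker := by
    intro x hx
    rw [Subgroup.mem_subgroupOf] at hx
    rw [MonoidHom.mem_ker]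
    show QuotientGroup.mk (ι x) = 1
    rw [QuotientGroup.eq_one_iff]
    exact Subgroup.mem_subgroupOf.mpr (Subgroup.mem_map_of_mem f hx)
  have hd := card_quot_dvd_of_le_ker Ψ hΨsurj hle
  exact hcard.imp (fun h => h.of_dvd hd) (fun h => h.of_dvd hd)

end Quot

section PiCore
variable {π : Set ℕ} {G : Type*} [Group G]

lemma le_piCore {N : Subgroup G} (hN : N.Normal) (h : IsPiNumber π (Nat.card N)) :
    N ≤ piCore π G := fun g hg => Subgroup.subset_normalClosure ⟨N, hN, h, hg⟩

lemma sub_eq_of_le_card [Finite G] {H K : Subgroup G} (h : H ≤ K)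
    (hc : Nat.card K ≤ Nat.card H) : H = K := by
  have e : Nat.card (H.subgroupOf K) = Nat.card H :=
    Nat.card_congr (Subgroup.subgroupOfEquivOfLe h).toEquiv
  have e2 : Nat.card (H.subgroupOf K) ≤ Nat.card ↥K := Nat.card_le_card_of_injective _ Subtype.val_injective
  have : H.subgroupOf K = ⊤ := Subgroup.eq_top_of_card_eq _ (le_antisymm e2 (hc.trans e.ge))
  exact le_antisymm h (Subgroup.subgroupOf_eq_top.mp this)

lemma isPiNumber_card_piCore (π : Set ℕ) (G : Type*) [Group G] [Finite G] :
    IsPiNumber π (Nat.card (piCore π G)) := by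
  classical
  haveI : Finite (Subgroup G) :=
    Finite.of_injective (fun H : Subgroup G => (H : Set G)) SetLike.coe_injective
  set S : Set (Subgroup G) := {N | N.Normal ∧ IsPiNumber π (Nat.card N)} with hS
  have hne : (⊥ : Subgroup G) ∈ S := ⟨inferInstance, by
    rw [Subgroup.card_bot]; exact IsPiNumber.one'⟩
  obtain ⟨M, hMS, hmax⟩ := Set.Finite.exists_maximalFor (fun N : Subgroup G => Nat.card N) S
    (Set.toFinite S) ⟨⊥, hne⟩
  haveI hMnorm : M.Normal := hMS.1
  have key : ∀ N ∈ S, N ≤ M := by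
    intro N hN
    haveI : N.Normal := hN.1
    have hsup : N ⊔ M ∈ S := by
      refine ⟨Subgroup.sup_normal N M, ?_⟩
      have hdvd : Nat.card ↥(N ⊔ M) ∣ Nat.card N * Nat.card M := by
        rw [Subgroup.card_eq_card_quotient_mul_card_subgroup (M.subgroupOf (N ⊔ M))]
        have h1 : Nat.card (↥(N ⊔ M) ⧸ M.subgroupOf (N ⊔ M)) = Nat.card (↥N ⧸ M.subgroupOf N) :=
          (Nat.card_congr (QuotientGroup.quotientInfEquivProdNormalQuotient N M).toEquiv).symm
        have h2 : Nat.card (M.subgroupOf (N ⊔ M)) = Nat.card M :=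
          Nat.card_congr (Subgroup.subgroupOfEquivOfLe le_sup_right).toEquiv
        rw [h1, h2]
        exact Nat.mul_dvd_mul_right
          (Dvd.intro _ (Subgroup.card_eq_card_quotient_mul_card_subgroup (M.subgroupOf N)).symm) _
      exact (hN.2.mul hMS.2).of_dvd hdvd
    have hcards : Nat.card M = Nat.card ↥(N ⊔ M) :=
      le_antisymm (Subgroup.card_le_of_le le_sup_right)
        (hmax hsup (Subgroup.card_le_of_le le_sup_right))
    have heq : M = N ⊔ M := sub_eq_of_le_card le_sup_right hcards.ge
    exact le_sup_left.trans heq.ge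
  have hle : piCore π G ≤ M :=
    Subgroup.normalClosure_le_normal (by rintro g ⟨N, hN1, hN2, hgN⟩; exact key N ⟨hN1, hN2⟩ hgN)
  exact hMS.2.of_dvd (Subgroup.card_dvd_of_le hle)

lemma piCore_map_equiv_le (e : G ≃* G) : (piCore π G).map e.toMonoidHom ≤ piCore π G := by
  rw [piCore, Subgroup.map_normalClosure _ _ e.surjective]
  refine Subgroup.normalClosure_mono ?_
  rintro _ ⟨g, ⟨N, hN1, hN2, hgN⟩, rfl⟩
  refine ⟨N.map e.toMonoidHom, hN1.map _ e.surjective, ?_, Subgroup.mem_map_of_mem _ hgN⟩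
  rwa [(Nat.card_congr (Subgroup.equivMapOfInjective N _ e.injective).toEquiv).symm]

lemma map_subtype_piCore_normal {N : Subgroup G} (hN : N.Normal) :
    ((piCore π ↥N).map N.subtype).Normal := by
  haveI := hN
  constructor
  rintro _ ⟨x, hx, rfl⟩ g
  refine ⟨MulAut.conjNormal g x, piCore_map_equiv_le (MulAut.conjNormal g) ⟨x, hx, rfl⟩, ?_⟩
  simpa using MulAut.conjNormal_apply g x

end PiCore

section Dich
universe u

lemma normal_of_subgroupOf_top {G : Type*} [Group G] {N : Subgroup G}
    (h : (N.subgroupOf ⊤).Normal) : N.Normal := by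
  constructor
  intro a ha g
  have := h.conj_mem ⟨a, Subgroup.mem_top a⟩ (Subgroup.mem_subgroupOf.mpr ha)
    ⟨g, Subgroup.mem_top g⟩
  exact Subgroup.mem_subgroupOf.mp this

lemma card_quot_subgroupOf_top {G : Type*} [Group G] (N : Subgroup G) [N.Normal] :
    Nat.card (↥(⊤ : Subgroup G) ⧸ N.subgroupOf (⊤ : Subgroup G)) = N.index := by
  let f : ↥(⊤ : Subgroup G) →* G ⧸ N := (QuotientGroup.mk' N).comp (Subgroup.topEquiv).toMonoidHom
  have hf : Function.Surjective f :=
    (QuotientGroup.mk'_surjective N).comp Subgroup.topEquiv.surjective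
  have hker : N.subgroupOf ⊤ = f.ker := by
    ext x
    simp [f, Subgroup.mem_subgroupOf, MonoidHom.mem_ker, QuotientGroup.eq_one_iff]
    exact ⟨fun h => ⟨x, h, rfl⟩, by rintro ⟨y, hy, rfl⟩; exact hy⟩
  rw [hker, Nat.card_congr (QuotientGroup.quotientKerEquivOfSurjective f hf).toEquiv]
  rfl

lemma dichotomy_aux (π : Set ℕ) : ∀ (k : ℕ) (G : Type u) [Group G] [Finite G],
    Nat.card G = k → IsPiSeparable π G → Nat.card G ≠ 1 →
    piCore π G ≠ ⊥ ∨ piCore {q | q ∉ π} G ≠ ⊥ := by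
  intro k
  induction k using Nat.strong_induction_on with
  | _ k IH =>
  intro G _ _ hcard hsep hG
  obtain ⟨n, H, hmono, hbot, htop, hstep⟩ := hsep
  haveI : Nontrivial G :=
    Finite.one_lt_card_iff_nontrivial.mp (lt_of_le_of_ne Nat.card_pos (Ne.symm hG))
  classical
  have hex : ∃ j, ∃ h : j < n + 1, H ⟨j, h⟩ = ⊤ := ⟨n, n.lt_succ_self, htop⟩
  obtain ⟨hjlt, hHj⟩ := Nat.find_spec hex
  set j := Nat.find hex with hjdef
  have hj0 : j ≠ 0 := by
    intro h0
    apply (bot_ne_top (α := Subgroup G))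
    rw [← hbot, ← hHj]
    congr 1
    ext
    rw [Fin.val_zero]
    exact h0.symm
  have hj1 : j - 1 < n := by omega
  set i : Fin n := ⟨j - 1, hj1⟩ with hi
  have hisucc : i.succ = ⟨j, hjlt⟩ := by ext; simp [hi]; omega
  have hics : i.castSucc = ⟨j - 1, by omega⟩ := by ext; simp [hi]
  obtain ⟨hnorm, hfac⟩ := hstep i
  rw [hisucc, hHj] at hnorm hfac
  set N := H i.castSucc with hN
  haveI hNnormal : N.Normal := normal_of_subgroupOf_top hnorm
  rw [card_quot_subgroupOf_top] at hfac
  have hNne : N ≠ ⊤ := by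
    intro h
    refine Nat.find_min hex (show j - 1 < j by omega) ⟨by omega, ?_⟩
    rw [← hics]; exact h
  by_cases hNbot : N = ⊥
  · rw [hNbot, Subgroup.index_bot] at hfac
    have htopmem : ∀ σ : Set ℕ, IsPiNumber σ (Nat.card G) → piCore σ G ≠ ⊥ := by
      intro σ hσ
      have h1 : (⊤ : Subgroup G) ≤ piCore σ G :=
        le_piCore inferInstance (by rwa [Subgroup.card_top])
      intro hbot'
      exact bot_ne_top (le_bot_iff.mp (hbot' ▸ h1)).symm
    exact hfac.imp (htopmem _) (htopmem _)
  · have hcardN : Nat.card N ≠ 1 := fun h => hNbot (Subgroup.card_eq_one.mp h)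
    have hlt : Nat.card N < k := by
      rw [← hcard]
      exact lt_of_le_of_ne (Nat.card_le_card_of_injective _ Subtype.val_injective)
        (fun h => hNne (Subgroup.eq_top_of_card_eq N h))
    have hsepN : IsPiSeparable π ↥N :=
      IsPiSeparable.subgroup ⟨n, H, hmono, hbot, htop, hstep⟩ N
    have lift : ∀ σ : Set ℕ, piCore σ ↥N ≠ ⊥ → piCore σ G ≠ ⊥ := by
      intro σ hσ
      set D := (piCore σ ↥N).map N.subtype with hD
      have hDbot : D ≠ ⊥ := fun h =>
        hσ ((Subgroup.map_eq_bot_iff_of_injective _ (Subgroup.subtype_injective N)).mp h)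
      have hDcard : IsPiNumber σ (Nat.card D) := by
        have he : Nat.card D = Nat.card (piCore σ ↥N) :=
          (Nat.card_congr
            (Subgroup.equivMapOfInjective _ _ (Subgroup.subtype_injective N)).toEquiv).symm
        rw [he]; exact isPiNumber_card_piCore σ ↥N
      have hle := le_piCore (map_subtype_piCore_normal hNnormal) hDcard
      intro hbot'
      exact hDbot (le_bot_iff.mp (hbot' ▸ hle))
    exact (IH _ hlt ↥N rfl hsepN hcardN).imp (lift _) (lift _)

end Dich

section LemF

lemma conj_pow_eq {L : Type*} [Group L] (g x : L) (n : ℕ) :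
    (g * x * g⁻¹) ^ n = g * x ^ n * g⁻¹ := by
  induction n with
  | zero => simp
  | succ n ih => rw [pow_succ, pow_succ, ih]; group

lemma ker_le_comap_mk' {L : Type*} [Group L] {Z : Subgroup L} [Z.Normal]
    (S : Subgroup (L ⧸ Z)) : Z ≤ S.comap (QuotientGroup.mk' Z) := by
  intro z hz
  have h1 : QuotientGroup.mk' Z z = 1 := (QuotientGroup.eq_one_iff z).mpr hz
  simpa [Subgroup.mem_comap, h1] using one_mem S

lemma comap_mk'_card {L : Type*} [Group L] [Finite L] {Z : Subgroup L} [Z.Normal]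
    (S : Subgroup (L ⧸ Z)) :
    Nat.card (↥(S.comap (QuotientGroup.mk' Z)) ⧸
      Z.subgroupOf (S.comap (QuotientGroup.mk' Z))) = Nat.card S := by
  set K := S.comap (QuotientGroup.mk' Z) with hK
  let ψ : ↥K →* L ⧸ Z := (QuotientGroup.mk' Z).comp K.subtype
  have hker : Z.subgroupOf K = ψ.ker := by
    ext x
    simp [ψ, Subgroup.mem_subgroupOf, MonoidHom.mem_ker, QuotientGroup.eq_one_iff]
  have hrange : ψ.range = S := by
    rw [MonoidHom.range_comp, Subgroup.range_subtype]
    exact Subgroup.map_comap_eq_self_of_surjective (QuotientGroup.mk'_surjective Z) S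
  rw [hker, Nat.card_congr (QuotientGroup.quotientKerEquivRange ψ).toEquiv, hrange]

lemma isPiNumber_card_of_core_conditions {L : Type*} [Group L] [Finite L] {p : ℕ}
    (hsep : IsPiSeparable {p} L)
    (h1 : piCore {q | q ∉ ({p} : Set ℕ)} L = ⊥)
    (h2 : piCore {p} L ≤ Subgroup.center L) :
    IsPiNumber {p} (Nat.card L) := by
  set Z := piCore {p} L with hZdef
  have hq : Nat.card (L ⧸ Z) = 1 := by
    by_contra hq
    have hsepq := IsPiSeparable.quot hsep Z
    have hOp : piCore {p} (L ⧸ Z) = ⊥ := by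
      set S := piCore {p} (L ⧸ Z) with hSdef
      set K := S.comap (QuotientGroup.mk' Z) with hKdef
      have hZK : Z ≤ K := ker_le_comap_mk' S
      have hcardK : IsPiNumber {p} (Nat.card K) := by
        rw [Subgroup.card_eq_card_quotient_mul_card_subgroup (Z.subgroupOf K)]
        refine IsPiNumber.mul ?_ ?_
        · rw [show Nat.card (↥K ⧸ Z.subgroupOf K) = Nat.card S from comap_mk'_card S]
          exact isPiNumber_card_piCore _ _
        · rw [Nat.card_congr (Subgroup.subgroupOfEquivOfLe hZK).toEquiv]
          exact isPiNumber_card_piCore _ _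
      have hKZ : K = Z := le_antisymm (le_piCore inferInstance hcardK) hZK
      have hS : S = K.map (QuotientGroup.mk' Z) :=
        (Subgroup.map_comap_eq_self_of_surjective (QuotientGroup.mk'_surjective Z) S).symm
      rw [hS, hKZ]
      refine le_antisymm ?_ bot_le
      rintro _ ⟨z, hz, rfl⟩
      simpa [Subgroup.mem_bot] using (QuotientGroup.eq_one_iff z).mpr hz
    have hOp' : piCore {q | q ∉ ({p} : Set ℕ)} (L ⧸ Z) = ⊥ := by
      set S := piCore {q | q ∉ ({p} : Set ℕ)} (L ⧸ Z) with hSdef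
      set K := S.comap (QuotientGroup.mk' Z) with hKdef
      have hZK : Z ≤ K := ker_le_comap_mk' S
      haveI hKnorm : K.Normal := piCore_comap_normal _ _
      set m := Nat.card S with hm
      have hmpi : IsPiNumber {q | q ∉ ({p} : Set ℕ)} m := isPiNumber_card_piCore _ _
      have hquot : (Z.subgroupOf K).index = m := comap_mk'_card S
      have hcardZ' : Nat.card (Z.subgroupOf K) = Nat.card Z :=
        Nat.card_congr (Subgroup.subgroupOfEquivOfLe hZK).toEquiv
      haveI hZ'norm : (Z.subgroupOf K).Normal := by
        constructor
        intro a ha g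
        have hcen := Subgroup.mem_center_iff.mp (h2 (Subgroup.mem_subgroupOf.mp ha))
        rw [Subgroup.mem_subgroupOf] at ha ⊢
        have : ((g * a * g⁻¹ : ↥K) : L) = (a : L) := by
          push_cast
          rw [hcen (g : L)]
          group
        rwa [this]
      have hcop : Nat.Coprime (Nat.card (Z.subgroupOf K)) (Z.subgroupOf K).index := by
        rw [hcardZ', hquot]
        exact IsPiNumber.coprime (isPiNumber_card_piCore _ _) hmpi
      obtain ⟨Hc, hHc⟩ := Subgroup.exists_right_complement'_of_coprime hcop
      have hcardHc : Nat.card Hc = m := by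
        rw [← hHc.symm.index_eq_card]
        exact hquot
      set D := Hc.map K.subtype with hDdef
      have hpow : ∀ y : ↥K, y ∈ Hc → y ^ m = 1 := by
        intro y hy
        have hdvd : orderOf (⟨y, hy⟩ : Hc) ∣ m := hcardHc ▸ orderOf_dvd_natCard _
        have hpp : (⟨y, hy⟩ : Hc) ^ m = 1 := orderOf_dvd_iff_pow_eq_one.mp hdvd
        exact congrArg Subtype.val hpp
      have hmemD : ∀ x : L, x ∈ D ↔ x ∈ K ∧ x ^ m = 1 := by
        intro x
        constructor
        · rintro ⟨y, hy, rfl⟩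
          exact ⟨y.2, by rw [← map_pow, hpow y hy, map_one]⟩
        · rintro ⟨hxK, hxm⟩
          obtain ⟨⟨z, h⟩, hzh, -⟩ := hHc.existsUnique (⟨x, hxK⟩ : ↥K)
          have hzZ : ((z : ↥K) : L) ∈ Z := Subgroup.mem_subgroupOf.mp z.2
          have hzcen : Commute (z : ↥K) (h : ↥K) := by
            have := Subgroup.mem_center_iff.mp (h2 hzZ) ((h : ↥K) : L)
            exact Subtype.ext (by push_cast; exact this.symm)
          have hx1 : (⟨x, hxK⟩ : ↥K) ^ m = 1 := Subtype.ext (by push_cast; exact hxm)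
          have hpowz : (z : ↥K) ^ m = 1 := by
            have hcomm := hzcen.mul_pow m
            rw [hzh, hx1, hpow _ h.2, mul_one] at hcomm
            exact hcomm.symm
          have hz1 : (z : ↥K) = 1 := by
            have hd1 : orderOf (z : ↥K) ∣ m := orderOf_dvd_iff_pow_eq_one.mpr hpowz
            have hd2 : orderOf (z : ↥K) ∣ Nat.card (Z.subgroupOf K) := by
              have := orderOf_dvd_natCard (⟨(z : ↥K), z.2⟩ : Z.subgroupOf K)
              rwa [Subgroup.orderOf_mk] at this
            have hcop2 : Nat.gcd (Nat.card (Z.subgroupOf K)) m = 1 := by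
              rw [← hquot]; exact hcop
            have hgd : orderOf (z : ↥K) ∣ 1 := hcop2 ▸ Nat.dvd_gcd hd2 hd1
            exact orderOf_eq_one_iff.mp (Nat.dvd_one.mp hgd)
          rw [hz1, one_mul] at hzh
          exact ⟨(h : ↥K), h.2, congrArg Subtype.val hzh⟩
      have hDnorm : D.Normal := by
        constructor
        intro x hx g
        rw [hmemD] at hx ⊢
        refine ⟨hKnorm.conj_mem x hx.1 g, ?_⟩
        rw [conj_pow_eq, hx.2]
        group
      have hcardD : IsPiNumber {q | q ∉ ({p} : Set ℕ)} (Nat.card D) := by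
        have he : Nat.card D = Nat.card Hc :=
          (Nat.card_congr
            (Subgroup.equivMapOfInjective _ _ (Subgroup.subtype_injective K)).toEquiv).symm
        rw [he, hcardHc]
        exact hmpi
      have hDbot : D = ⊥ := le_bot_iff.mp (h1 ▸ le_piCore hDnorm hcardD)
      have hHcbot : Hc = ⊥ :=
        (Subgroup.map_eq_bot_iff_of_injective _ (Subgroup.subtype_injective K)).mp hDbot
      have hm1 : Nat.card S = 1 := by
        rw [← hm, ← hcardHc, hHcbot, Subgroup.card_bot]
      exact Subgroup.card_eq_one.mp hm1
    rcases dichotomy_aux {p} (Nat.card (L ⧸ Z)) (L ⧸ Z) rfl hsepq hq with h | h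
    · exact h hOp
    · exact h hOp'
  have hcards := Subgroup.card_eq_card_quotient_mul_card_subgroup Z
  rw [hq, one_mul] at hcards
  rw [hcards]
  exact isPiNumber_card_piCore _ _

end LemF

section MainLemma
universe u

lemma pi_singleton_dvd_pow {p n : ℕ} (hp : p.Prime) (h : IsPiNumber {p} n) (hn : n ≠ 0) :
    n ∣ p ^ n := by
  rcases eq_or_ne n 1 with rfl | hn1
  · exact one_dvd _
  · obtain ⟨q, hq, hqd⟩ := Nat.exists_prime_and_dvd hn1
    have hqp : q = p := h q hq hqd
    have hppow : IsPrimePow n := isPrimePow_iff_unique_prime_dvd.mpr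
      ⟨p, ⟨hp, hqp ▸ hqd⟩, fun r ⟨hr, hrd⟩ => h r hr hrd⟩
    obtain ⟨p', k, hp', hk, hkn⟩ := hppow
    have hp'p : p' = p := by
      have hd : p' ∣ n := hkn ▸ dvd_pow_self p' hk.ne'
      exact h p' (Nat.prime_iff.mpr hp') hd
    have hkk : k ≤ n := le_of_lt (lt_of_lt_of_le
      (Nat.lt_pow_self (n := k) (hp'p ▸ hp.one_lt : 1 < p')) hkn.le)
    calc n = p' ^ k := hkn.symm
      _ ∣ p' ^ n := pow_dvd_pow p' hkk
      _ = p ^ n := by rw [hp'p]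

lemma isPGroup_of_isPiNumber {p : ℕ} (hp : p.Prime) {K : Type*} [Group K] [Finite K]
    (h : IsPiNumber {p} (Nat.card K)) : IsPGroup p K := by
  intro g
  refine ⟨orderOf g, orderOf_dvd_iff_pow_eq_one.mp ?_⟩
  exact pi_singleton_dvd_pow hp (h.of_dvd (orderOf_dvd_natCard g)) (orderOf_pos g).ne'

lemma main_aux (p : ℕ) (hp : p.Prime) : ∀ (k : ℕ) (G : Type u) [Group G] [Finite G],
    Nat.card G = k → IsPiSeparable {p} G → ∀ b c : G, ¬ p ∣ orderOf b → ¬ p ∣ orderOf c →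
    ¬ p ∣ (Subgroup.centralizer {b}).index → ¬ p ∣ orderOf (b * c) := by
  intro k
  induction k using Nat.strong_induction_on with
  | _ k IH =>
  intro G _ _ hcard hsep b c hb hc hib
  by_cases hW : piCore {q | q ∉ ({p} : Set ℕ)} G = ⊥
  case neg =>
    set W := piCore {q | q ∉ ({p} : Set ℕ)} G with hWdef
    haveI : W.Normal := piCore_normal _ _
    set f := QuotientGroup.mk' W with hf
    have hWcard : 1 < Nat.card W := by
      have h0 := Nat.card_pos (α := ↥W)
      have hne : Nat.card W ≠ 1 := fun h => hW (Subgroup.card_eq_one.mp h)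
      omega
    have hlt : Nat.card (G ⧸ W) < k := by
      rw [← hcard, Subgroup.card_eq_card_quotient_mul_card_subgroup W]
      have hpos : 0 < Nat.card (G ⧸ W) := Nat.card_pos
      exact (Nat.lt_mul_iff_one_lt_right hpos).mpr hWcard
    have hb' : ¬ p ∣ orderOf (f b) := fun h => hb (h.trans (orderOf_map_dvd f b))
    have hc' : ¬ p ∣ orderOf (f c) := fun h => hc (h.trans (orderOf_map_dvd f c))
    have hib' : ¬ p ∣ (Subgroup.centralizer {f b}).index := by
      intro hdvd
      have hsub : (Subgroup.centralizer {b}).map f ≤ Subgroup.centralizer {f b} := by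
        rintro _ ⟨x, hx, rfl⟩
        rw [Subgroup.mem_centralizer_iff]
        rintro y hy
        rw [Set.mem_singleton_iff] at hy
        subst hy
        rw [← map_mul, ← map_mul, Subgroup.mem_centralizer_iff.mp hx b rfl]
      have d1 : (Subgroup.centralizer {f b}).index ∣ ((Subgroup.centralizer {b}).map f).index :=
        Subgroup.index_dvd_of_le hsub
      have d2 : ((Subgroup.centralizer {b}).map f).index ∣ (Subgroup.centralizer {b}).index :=
        Subgroup.index_map_dvd _ (QuotientGroup.mk'_surjective W)
      exact hib (hdvd.trans (d1.trans d2))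
    have hmain := IH _ hlt (G ⧸ W) rfl (hsep.quot W) (f b) (f c) hb' hc' hib'
    rw [← map_mul] at hmain
    set m := orderOf (f (b * c)) with hm
    have hmem : (b * c) ^ m ∈ W := by
      rw [← QuotientGroup.eq_one_iff ((b * c) ^ m)]
      show f ((b * c) ^ m) = 1
      rw [map_pow]
      exact pow_orderOf_eq_one _
    have hk2 : orderOf ((b * c) ^ m) ∣ Nat.card W := by
      have := orderOf_dvd_natCard (⟨(b * c) ^ m, hmem⟩ : W)
      rwa [Subgroup.orderOf_mk] at this
    have hord : orderOf (b * c) ∣ m * orderOf ((b * c) ^ m) := by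
      apply orderOf_dvd_iff_pow_eq_one.mpr
      rw [pow_mul]
      exact pow_orderOf_eq_one _
    intro hdv
    rcases (Nat.Prime.dvd_mul hp).mp (hdv.trans hord) with h | h
    · exact hmain h
    · have := (isPiNumber_card_piCore {q | q ∉ ({p} : Set ℕ)} G) p hp (h.trans hk2)
      simp at this
  case pos =>
    haveI := Fact.mk hp
    set Hb := Subgroup.centralizer {b} with hHbdef
    obtain ⟨Q'⟩ : Nonempty (Sylow p ↥Hb) := inferInstance
    set Q := Q'.toSubgroup.map Hb.subtype with hQdef
    have hQp : IsPGroup p ↥Q := Q'.isPGroup'.map Hb.subtype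
    have hcardQ : Nat.card Q = p ^ (Nat.card G).factorization p := by
      have h1 : Nat.card Q = Nat.card Q'.toSubgroup :=
        (Nat.card_congr
          (Subgroup.equivMapOfInjective _ _ (Subgroup.subtype_injective Hb)).toEquiv).symm
      rw [h1, Q'.card_eq_multiplicity]
      congr 1
      have h2 : Nat.card G = Nat.card Hb * Hb.index := (Subgroup.card_mul_index Hb).symm
      rw [h2, Nat.factorization_mul Nat.card_pos.ne' Subgroup.index_ne_zero_of_finite]
      simp [Nat.factorization_eq_zero_of_not_dvd hib]
    obtain ⟨Qs, hQs⟩ := hQp.exists_le_sylow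
    have hQeq : Q = Qs := by
      refine sub_eq_of_le_card hQs ?_
      rw [hcardQ, Qs.card_eq_multiplicity]
    have hOple : piCore {p} G ≤ Q := by
      have hOp : IsPGroup p ↥(piCore {p} G) :=
        isPGroup_of_isPiNumber hp (isPiNumber_card_piCore _ _)
      obtain ⟨R, hR⟩ := hOp.exists_le_sylow
      obtain ⟨g, hg⟩ := MulAction.exists_smul_eq G R Qs
      have step1 : piCore {p} G = MulAut.conj g • piCore {p} G :=
        (Subgroup.Normal.conj_smul_eq_self g _).symm
      have step2 : MulAut.conj g • (piCore {p} G) ≤ MulAut.conj g • R.toSubgroup := by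
        rw [Subgroup.pointwise_smul_def, Subgroup.pointwise_smul_def]
        exact Subgroup.map_mono hR
      have step3 : MulAut.conj g • R.toSubgroup = (Qs : Subgroup G) := by
        rw [← Sylow.coe_subgroup_smul, hg]
      calc piCore {p} G = MulAut.conj g • piCore {p} G := step1
        _ ≤ MulAut.conj g • R.toSubgroup := step2
        _ = (Qs : Subgroup G) := step3
        _ = Q := hQeq.symm
    have hbC : b ∈ Subgroup.centralizer ((piCore {p} G : Subgroup G) : Set G) := by
      rw [Subgroup.mem_centralizer_iff]
      intro h hh
      have hhHb : h ∈ Hb := Subgroup.map_subtype_le _ (hOple hh)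
      exact (Subgroup.mem_centralizer_iff.mp hhHb b rfl).symm
    set C := Subgroup.centralizer ((piCore {p} G : Subgroup G) : Set G) with hCdef
    haveI hCnorm : C.Normal := by
      constructor
      intro x hx g
      rw [Subgroup.mem_centralizer_iff] at hx ⊢
      intro h hh
      have hh' : g⁻¹ * h * g ∈ piCore {p} G := by
        have := (piCore_normal {p} G).conj_mem h hh g⁻¹
        simpa [mul_assoc] using this
      have hx' := hx _ hh'
      calc h * (g * x * g⁻¹) = g * ((g⁻¹ * h * g) * x) * g⁻¹ := by group
        _ = g * (x * (g⁻¹ * h * g)) * g⁻¹ := by rw [hx']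
        _ = (g * x * g⁻¹) * h := by group
    have hsepC : IsPiSeparable {p} ↥C := IsPiSeparable.subgroup hsep C
    have h1C : piCore {q | q ∉ ({p} : Set ℕ)} ↥C = ⊥ := by
      set D := (piCore {q | q ∉ ({p} : Set ℕ)} ↥C).map C.subtype with hDdef
      have hDcard : IsPiNumber {q | q ∉ ({p} : Set ℕ)} (Nat.card D) := by
        have he : Nat.card D = Nat.card (piCore {q | q ∉ ({p} : Set ℕ)} ↥C) :=
          (Nat.card_congr
            (Subgroup.equivMapOfInjective _ _ (Subgroup.subtype_injective C)).toEquiv).symm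
        rw [he]
        exact isPiNumber_card_piCore _ _
      have hle := le_piCore (map_subtype_piCore_normal hCnorm) hDcard
      rw [hW] at hle
      exact (Subgroup.map_eq_bot_iff_of_injective _
        (Subgroup.subtype_injective C)).mp (le_bot_iff.mp hle)
    have h2C : piCore {p} ↥C ≤ Subgroup.center ↥C := by
      intro x hx
      rw [Subgroup.mem_center_iff]
      intro y
      have hDcard : IsPiNumber {p} (Nat.card ((piCore {p} ↥C).map C.subtype)) := by
        have he : Nat.card ((piCore {p} ↥C).map C.subtype) = Nat.card (piCore {p} ↥C) :=
          (Nat.card_congr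
            (Subgroup.equivMapOfInjective _ _ (Subgroup.subtype_injective C)).toEquiv).symm
        rw [he]
        exact isPiNumber_card_piCore _ _
      have hxG : (x : G) ∈ piCore {p} G :=
        le_piCore (map_subtype_piCore_normal hCnorm) hDcard ⟨x, hx, rfl⟩
      have hcomm := Subgroup.mem_centralizer_iff.mp y.2 _ hxG
      exact Subtype.ext hcomm.symm
    have hpc := isPiNumber_card_of_core_conditions hsepC h1C h2C
    have hb1 : b = 1 := by
      have hbo : orderOf b ∣ Nat.card ↥C := by
        have := orderOf_dvd_natCard (⟨b, hbC⟩ : ↥C)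
        rwa [Subgroup.orderOf_mk] at this
      by_contra hbne
      have hone : orderOf b ≠ 1 := fun h => hbne (orderOf_eq_one_iff.mp h)
      obtain ⟨q, hq, hqd⟩ := Nat.exists_prime_and_dvd hone
      have : q = p := hpc q hq (hqd.trans hbo)
      exact hb (this ▸ hqd)
    rw [hb1, one_mul]
    exact hc

end MainLemma

section ClassProduct
variable {G : Type*} [Group G] [Finite G]

lemma conjClass_card_eq_index (x : G) :
    Nat.card (conjClass G x) = (Subgroup.centralizer {x}).index := by
  have h1 : conjClass G x = MulAction.orbit (ConjAct G) x := by
    ext y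
    rw [conjClass, Set.mem_setOf_eq, ConjAct.mem_orbit_conjAct]
    exact isConj_comm
  have h2 : (Subgroup.centralizer {x}).index = (MulAction.stabilizer (ConjAct G) x).index := by
    rw [Subgroup.centralizer_eq_comap_stabilizer]
    exact Subgroup.index_comap_of_surjective _ ConjAct.toConjAct.surjective
  rw [h1, Nat.card_congr (MulAction.orbitEquivQuotientStabilizer (ConjAct G) x), h2]
  rfl

lemma index_inf_eq_mul {H K : Subgroup G}
    (h : Nat.Coprime H.index K.index) : (H ⊓ K).index = H.index * K.index := by
  refine le_antisymm Subgroup.index_inf_le (Nat.le_of_dvd ?_ ?_)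
  · exact Nat.pos_of_ne_zero Subgroup.index_ne_zero_of_finite
  · exact Nat.Coprime.mul_dvd_of_dvd_of_dvd h (Subgroup.index_dvd_of_le inf_le_left)
      (Subgroup.index_dvd_of_le inf_le_right)

lemma exists_mul_eq_of_coprime_index {H K : Subgroup G}
    (h : Nat.Coprime H.index K.index) (g : G) : ∃ x ∈ H, ∃ y ∈ K, x * y = g := by
  have hrel : (K.subgroupOf H).index = K.index := by
    have h1 : K.relIndex H * H.index = (H ⊓ K).index := by
      rw [← Subgroup.inf_relIndex_left]
      exact Subgroup.relIndex_mul_index inf_le_left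
    rw [index_inf_eq_mul h] at h1
    have hpos : 0 < H.index := Nat.pos_of_ne_zero Subgroup.index_ne_zero_of_finite
    exact Nat.eq_of_mul_eq_mul_right hpos (h1.trans (mul_comm _ _))
  let e : ↥H ⧸ K.subgroupOf H → G ⧸ K := Quotient.map' Subtype.val (fun a b hab => by
    rw [QuotientGroup.leftRel_apply] at hab ⊢
    simpa [Subgroup.mem_subgroupOf] using hab)
  have hinj : Function.Injective e := by
    intro a b
    refine Quotient.inductionOn₂' a b ?_
    intro x y hxy
    apply Quotient.sound'
    rw [QuotientGroup.leftRel_apply, Subgroup.mem_subgroupOf]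
    have hxy' := Quotient.exact' hxy
    rw [QuotientGroup.leftRel_apply] at hxy'
    simpa using hxy'
  have hcall : Nat.card (↥H ⧸ K.subgroupOf H) = Nat.card (G ⧸ K) := hrel
  have hbij : Function.Bijective e := (Nat.bijective_iff_injective_and_card e).mpr ⟨hinj, hcall⟩
  obtain ⟨q, hq⟩ := hbij.surjective (QuotientGroup.mk g)
  revert hq
  refine Quotient.inductionOn' q ?_
  intro x hq
  have hmem : (↑x)⁻¹ * g ∈ K := by
    have : ((x : G) : G ⧸ K) = QuotientGroup.mk g := hq
    exact QuotientGroup.eq.mp this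
  exact ⟨↑x, x.2, (↑x)⁻¹ * g, hmem, by group⟩

lemma conjClass_mul_eq {b c : G}
    (hcop : Nat.Coprime (Subgroup.centralizer {b}).index (Subgroup.centralizer {c}).index) :
    conjClass G b * conjClass G c = conjClass G (b * c) := by
  ext z
  constructor
  · rintro ⟨x, hx, y, hy, rfl⟩
    obtain ⟨g, hg⟩ := isConj_iff.mp hx
    obtain ⟨h', hh⟩ := isConj_iff.mp hy
    obtain ⟨u, hu, v, hv, huv⟩ := exists_mul_eq_of_coprime_index hcop (g⁻¹ * h')
    rw [Subgroup.mem_centralizer_iff] at hu hv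
    have hub : b * u = u * b := hu b rfl
    have hvc' : v * c * v⁻¹ = c := by rw [← hv c rfl]; group
    have hgh : g * (u * v) = h' := by rw [huv]; group
    refine isConj_iff.mpr ⟨g * u, ?_⟩
    calc (g * u) * (b * c) * (g * u)⁻¹
        = g * (u * b) * c * u⁻¹ * g⁻¹ := by group
      _ = g * (b * u) * c * u⁻¹ * g⁻¹ := by rw [← hub]
      _ = g * b * u * (v * c * v⁻¹) * u⁻¹ * g⁻¹ := by rw [hvc']; group
      _ = (g * b * g⁻¹) * ((g * (u * v)) * c * (g * (u * v))⁻¹) := by group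
      _ = x * y := by rw [hgh, hg, hh]
  · intro hz
    obtain ⟨k, hk⟩ := isConj_iff.mp hz
    refine ⟨k * b * k⁻¹, isConj_iff.mpr ⟨k, rfl⟩, k * c * k⁻¹, isConj_iff.mpr ⟨k, rfl⟩, ?_⟩
    rw [← hk]; group

lemma orderOf_mul_comm' (a b : G) : orderOf (a * b) = orderOf (b * a) := by
  have h1 : a * b = (MulAut.conj a) (b * a) := by
    simp [MulAut.conj_apply]
    group
  rw [h1]
  exact orderOf_injective ((MulAut.conj a) : G →* G) (MulAut.conj a).injective (b * a)

end ClassProduct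

/-- Lemma: product of two coprime classes is a class. -/
theorem stmt7 {G : Type*} [Group G] [Fintype G] {p : ℕ} (hp : p.Prime)
    (hsep : IsPiSeparable {p} G) {b c : G}
    (hb : b ∉ Subgroup.center G) (hb' : ¬ p ∣ orderOf b)
    (hc : c ∉ Subgroup.center G) (hc' : ¬ p ∣ orderOf c)
    (hcop : Nat.gcd (Nat.card ↥(conjClass G b)) (Nat.card ↥(conjClass G c)) = 1) :
    (∃ b' ∈ conjClass G b, ∃ c' ∈ conjClass G c,
      conjClass G b * conjClass G c = conjClass G (b' * c') ∧ ¬ p ∣ orderOf (b' * c')) ∧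
    Nat.card ↥(conjClass G b * conjClass G c) ≠ 1 ∧
    Nat.card ↥(conjClass G b * conjClass G c) ∣
      Nat.card ↥(conjClass G b) * Nat.card ↥(conjClass G c) := by
  have hcb : Nat.card ↥(conjClass G b) = (Subgroup.centralizer {b}).index :=
    conjClass_card_eq_index b
  have hcc : Nat.card ↥(conjClass G c) = (Subgroup.centralizer {c}).index :=
    conjClass_card_eq_index c
  have hcop' : Nat.Coprime (Subgroup.centralizer {b}).index (Subgroup.centralizer {c}).index := by
    rwa [hcb, hcc] at hcop
  have hBC : conjClass G b * conjClass G c = conjClass G (b * c) := conjClass_mul_eq hcop'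
  have hreg : ¬ p ∣ orderOf (b * c) := by
    have hor : ¬ p ∣ (Subgroup.centralizer {b}).index ∨
        ¬ p ∣ (Subgroup.centralizer {c}).index := by
      by_contra hcon
      push_neg at hcon
      have hd : p ∣ 1 := hcop' ▸ Nat.dvd_gcd hcon.1 hcon.2
      exact hp.one_lt.ne' (Nat.dvd_one.mp hd)
    rcases hor with h | h
    · exact main_aux p hp (Nat.card G) G rfl hsep b c hb' hc' h
    · have hm := main_aux p hp (Nat.card G) G rfl hsep c b hc' hb' h
      rwa [orderOf_mul_comm'] at hm
  have hinf : Subgroup.centralizer {b} ⊓ Subgroup.centralizer {c} ≤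
      Subgroup.centralizer {b * c} := by
    intro x hx
    have h1 : b * x = x * b := Subgroup.mem_centralizer_iff.mp hx.1 b rfl
    have h2 : c * x = x * c := Subgroup.mem_centralizer_iff.mp hx.2 c rfl
    rw [Subgroup.mem_centralizer_iff]
    rintro y hy
    rw [Set.mem_singleton_iff] at hy
    subst hy
    calc (b * c) * x = b * (c * x) := by group
      _ = b * (x * c) := by rw [h2]
      _ = (b * x) * c := by group
      _ = x * (b * c) := by rw [h1]; group
  have hne : Nat.card ↥(conjClass G b * conjClass G c) ≠ 1 := by
    rw [hBC, conjClass_card_eq_index]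
    intro h1
    have htop : Subgroup.centralizer {b * c} = ⊤ := Subgroup.index_eq_one.mp h1
    have hcen : ∀ g : G, Commute (b * c) g := by
      intro g
      have hg : g ∈ Subgroup.centralizer {b * c} := by rw [htop]; exact Subgroup.mem_top g
      exact Subgroup.mem_centralizer_iff.mp hg (b * c) rfl
    have hbc_eq : Subgroup.centralizer {b} = Subgroup.centralizer {c} := by
      ext x
      simp only [Subgroup.mem_centralizer_iff, Set.mem_singleton_iff, forall_eq]
      constructor
      · intro hx
        have hcx : Commute (b⁻¹ * (b * c)) x := (Commute.inv_left hx).mul_left (hcen x)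
        rwa [inv_mul_cancel_left] at hcx
      · intro hx
        have hbx : Commute ((b * c) * c⁻¹) x := (hcen x).mul_left (Commute.inv_left hx)
        rwa [mul_inv_cancel_right] at hbx
    rw [hcb, hcc, hbc_eq, Nat.gcd_self] at hcop
    have : Subgroup.centralizer {c} = ⊤ := Subgroup.index_eq_one.mp hcop
    apply hc
    rw [Subgroup.mem_center_iff]
    intro g
    have hg : g ∈ Subgroup.centralizer {c} := by rw [this]; exact Subgroup.mem_top g
    exact (Subgroup.mem_centralizer_iff.mp hg c rfl).symm
  have hdvd : Nat.card ↥(conjClass G b * conjClass G c) ∣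
      Nat.card ↥(conjClass G b) * Nat.card ↥(conjClass G c) := by
    rw [hBC, conjClass_card_eq_index, hcb, hcc, ← index_inf_eq_mul hcop']
    exact Subgroup.index_dvd_of_le hinf
  exact ⟨⟨b, IsConj.refl b, c, IsConj.refl c, hBC, hreg⟩, hne, hdvd⟩
end

section
/- Let G be a finite group, let π be a set of primes, and let H be a Hall π-subgroup of G. If x ∈ H and |x^G| is a π-number, then x ∈ O_π(G). -/
open Pointwise

/-- Wielandt's lemma. -/
theorem stmt14 {G : Type*} [Group G] [Fintype G] (π : Set ℕ) (H : Subgroup G)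
    (hH : IsHall π H) (x : G) (hx : x ∈ H)
    (h : IsPiNumber π (Nat.card ↥(conjClass G x))) :
    x ∈ piCore π G := by
  classical
  set C : Subgroup G := Subgroup.centralizer ((Subgroup.zpowers x : Subgroup G) : Set G) with hC
  -- card of conjugacy class equals index of centralizer
  have e1 : conjClass G x = MulAction.orbit (ConjAct G) x := by
    ext y
    rw [ConjAct.mem_orbit_conjAct]
    exact isConj_comm
  have e2 : Nat.card ↥(conjClass G x) = C.index := by
    rw [e1, Subgroup.index_eq_card]
    exact Nat.card_congr
      ((MulAction.orbitEquivQuotientStabilizer (ConjAct G) x).trans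
        (Subgroup.quotientEquivOfEq ((ConjAct.stabilizer_eq_centralizer x).trans
          (by rw [hC, Subgroup.zpowers_eq_closure, Subgroup.centralizer_closure]; rfl))))
  have hCind : IsPiNumber π C.index := e2 ▸ h
  have hCne : C.index ≠ 0 := Subgroup.index_ne_zero_of_finite
  have hHne : H.index ≠ 0 := Subgroup.index_ne_zero_of_finite
  -- coprimality
  have hcop : Nat.Coprime C.index H.index := by
    by_contra hg
    obtain ⟨p, hp, hpd⟩ := Nat.exists_prime_and_dvd (fun h1 => hg h1)
    exact (hH.2 p hp (hpd.trans (Nat.gcd_dvd_right _ _)))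
      (hCind p hp (hpd.trans (Nat.gcd_dvd_left _ _)))
  -- relindex equality
  have hrel : C.relIndex H = C.index := by
    have h1 : C.relIndex H * H.index = (C ⊓ H).index := by
      rw [← Subgroup.inf_relIndex_right C H]
      exact Subgroup.relIndex_mul_index inf_le_right
    have h2 : C.index ∣ (C ⊓ H).index := Subgroup.index_dvd_of_le inf_le_left
    have h3 : C.index ∣ C.relIndex H := by
      rw [← h1] at h2
      exact (Nat.Coprime.dvd_of_dvd_mul_right hcop h2)
    have h4 : C.relIndex H ≤ C.index := by
      have h5 : (C ⊓ H).index ≤ C.index * H.index := Subgroup.index_inf_le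
      rw [← h1] at h5
      exact Nat.le_of_mul_le_mul_right h5 (Nat.pos_of_ne_zero hHne)
    have h6 : C.relIndex H ≠ 0 := Subgroup.index_ne_zero_of_finite
    exact Nat.le_antisymm h4 (Nat.le_of_dvd (Nat.pos_of_ne_zero h6) h3)
  -- surjectivity of H → G ⧸ C
  have key : ∀ g : G, ∃ h : H, (h : G)⁻¹ * g ∈ C := by
    let f : H ⧸ C.subgroupOf H → G ⧸ C := Quotient.map' Subtype.val (fun a b hab => by
      rw [QuotientGroup.leftRel_apply] at hab ⊢
      exact hab)
    have hfmk : ∀ a : H, f (Quotient.mk'' a) = QuotientGroup.mk (a : G) := fun a => rfl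
    have hfinj : Function.Injective f := by
      intro a b
      induction a using Quotient.inductionOn'
      induction b using Quotient.inductionOn'
      rename_i a b
      intro hab
      have : ((a : G))⁻¹ * b ∈ C := by
        rw [hfmk, hfmk] at hab
        exact QuotientGroup.leftRel_apply.mp (Quotient.exact' hab)
      apply Quotient.sound'
      rw [QuotientGroup.leftRel_apply]
      exact this
    have hcard : Fintype.card (H ⧸ C.subgroupOf H) = Fintype.card (G ⧸ C) := by
      rw [← Nat.card_eq_fintype_card, ← Nat.card_eq_fintype_card,
        ← Subgroup.index_eq_card, ← Subgroup.index_eq_card]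
      exact hrel
    have hfsurj : Function.Surjective f :=
      (Fintype.bijective_iff_injective_and_card f).mpr ⟨hfinj, hcard⟩ |>.2
    intro g
    obtain ⟨q, hq⟩ := hfsurj (QuotientGroup.mk g)
    induction q using Quotient.inductionOn'
    rename_i a
    refine ⟨a, ?_⟩
    rw [hfmk] at hq
    exact QuotientGroup.leftRel_apply.mp (Quotient.exact' hq)
  -- every conjugate of x lies in H
  have hconj : conjClass G x ⊆ (H : Set G) := by
    rintro y hy
    obtain ⟨c, hc⟩ := isConj_iff.mp hy
    obtain ⟨a, ha⟩ := key c
    set d : G := (a : G)⁻¹ * c with hd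
    have hcd : c = (a : G) * d := by rw [hd]; group
    have hdx : d * x * d⁻¹ = x := by
      have := (Subgroup.mem_centralizer_iff.mp ha) x (Subgroup.mem_zpowers x)
      rw [← this]; group
    have : y = (a : G) * x * (a : G)⁻¹ := by
      rw [← hc, hcd]
      rw [show (a : G) * d * x * ((a : G) * d)⁻¹ = (a : G) * (d * x * d⁻¹) * (a : G)⁻¹ by group,
        hdx]
    rw [this]
    exact Subgroup.mul_mem _ (Subgroup.mul_mem _ a.2 hx) (Subgroup.inv_mem _ a.2)
  -- normal closure of {x} is a normal π-subgroup
  set N : Subgroup G := Subgroup.normalClosure {x} with hN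
  have hNH : N ≤ H := by
    apply (Subgroup.closure_le H).mpr
    intro y hy
    obtain ⟨a, ha, hay⟩ := Group.mem_conjugatesOfSet_iff.mp hy
    rw [Set.mem_singleton_iff] at ha
    subst ha
    exact hconj hay
  have hNpi : IsPiNumber π (Nat.card ↥N) := fun q hq hqd =>
    hH.1 q hq (hqd.trans (Subgroup.card_dvd_of_le hNH))
  exact Subgroup.subset_normalClosure ⟨N, Subgroup.normalClosure_normal, hNpi,
    Subgroup.subset_normalClosure (Set.mem_singleton x)⟩
end

section
/- Let G be a finite p-separable group, for a given prime p, and let q be a prime. If |x^G| is not divisible by q for every {p,q}'-element x ∈ G, then G is {p,q}-separable. -/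
open Pointwise

/-!
Refine the given `p`-series of `G`. The class-size hypothesis passes to normal subgroups and to
quotients, so it holds in every factor `F` of the series. In a `p'`-factor every element is
`p`-regular, so every `q'`-element of `F` has class size prime to `q`; such a group has a normal
Sylow `q`-subgroup `Q`, and the preimage of `Q` splits the factor into a `q`-group followed by a
`{p, q}'`-group.

The normal Sylow subgroup comes from counting. Every element is uniquely a commuting product of a
`q`-element and a `q'`-element, so `|F| = ∑ t(v)` over the `q'`-elements `v`, where `t(v)` is the
number of `q`-elements of `C(v)`. As `q ∤ [F : C(v)]`, `C(v)` contains a Sylow subgroup of order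
`q^a`, which gives `q^a ≤ t(v) ≤ 1 + s(v) (q^a - 1)`, with `s(v)` the number of Sylow subgroups
inside `C(v)`; counting pairs `(S, v)` through normalisers gives `q^a ∑ s(v) ≤ |F|`. Together
these force `t(v) = q^a`, and at `v = 1` this says that `F` has exactly `q^a` elements of
`q`-power order: its Sylow `q`-subgroup is unique.
-/

open Subgroup

lemma card_conjClass_eq_index {G : Type*} [Group G] (x : G) :
    Nat.card (conjClass G x) = (centralizer {x}).index := by
  have horbit : conjClass G x = MulAction.orbit (ConjAct G) x := by
    ext y; rw [ConjAct.mem_orbit_conjAct, isConj_comm]; rfl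
  rw [horbit, Nat.card_coe_set_eq, ← MulAction.index_stabilizer,
    centralizer_eq_comap_stabilizer]
  exact (index_comap_of_surjective _ (MulEquiv.surjective _)).symm

lemma card_conjClass_map_mulEquiv {G H : Type*} [Group G] [Group H] (e : G ≃* H) (x : G) :
    Nat.card (conjClass H (e x)) = Nat.card (conjClass G x) := by
  have himage : conjClass H (e x) = e '' conjClass G x := by
    ext z
    refine ⟨fun hz => ⟨e.symm z, by simpa [conjClass] using e.symm.toMonoidHom.map_isConj hz,
      by simp⟩, ?_⟩
    rintro ⟨w, hw, rfl⟩
    exact e.toMonoidHom.map_isConj hw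
  rw [himage, Nat.card_image_of_injective e.injective]

def IsPElement (p : ℕ) {G : Type*} [Group G] (g : G) : Prop := ∃ k, orderOf g ∣ p ^ k

section PElement

variable {G : Type*} [Group G] {p : ℕ} {g h : G}

namespace IsPElement

lemma of_mem_sylow {P : Sylow p G} (hg : g ∈ P) : IsPElement p g := by
  obtain ⟨k, hk⟩ := P.isPGroup' ⟨g, hg⟩
  exact ⟨k, orderOf_dvd_of_pow_eq_one (by simpa using congrArg Subtype.val hk)⟩

lemma inv (hg : IsPElement p g) : IsPElement p g⁻¹ := by
  rwa [IsPElement, orderOf_inv]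

lemma mul (hc : Commute g h) (hg : IsPElement p g) (hh : IsPElement p h) :
    IsPElement p (g * h) := by
  obtain ⟨k, hk⟩ := hg
  obtain ⟨l, hl⟩ := hh
  exact ⟨k + l, hc.orderOf_mul_dvd_lcm.trans <| Nat.lcm_dvd
    (hk.trans (pow_dvd_pow p le_self_add)) (hl.trans (pow_dvd_pow p le_add_self))⟩

lemma coprime_orderOf (hp : p.Prime) (hg : IsPElement p g) {n : ℕ} (hn : ¬ p ∣ n) :
    (orderOf g).Coprime n := by
  obtain ⟨k, hk⟩ := hg
  exact Nat.Coprime.coprime_dvd_left hk ((hp.coprime_iff_not_dvd.mpr hn).pow_left k)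

lemma eq_one (hp : p.Prime) (hg : IsPElement p g) (h : ¬ p ∣ orderOf g) : g = 1 :=
  orderOf_eq_one_iff.mp (Nat.eq_one_of_dvd_coprimes (hg.coprime_orderOf hp h) dvd_rfl dvd_rfl)

lemma eq_one_of_commute_mul (hp : p.Prime) (hg : IsPElement p g) (hc : Commute g h)
    (hh : ¬ p ∣ orderOf h) (hgh : ¬ p ∣ orderOf (g * h)) : g = 1 := by
  rw [hc.orderOf_mul_eq_mul_orderOf_of_coprime (hg.coprime_orderOf hp hh)] at hgh
  exact hg.eq_one hp fun hd => hgh (dvd_mul_of_dvd_left hd _)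

lemma mem_zpowers_mul {u v : G} (hp : p.Prime) (hu : IsPElement p u)
    (hv : ¬ p ∣ orderOf v) (hc : Commute u v) : u ∈ zpowers (u * v) := by
  obtain ⟨α, β, hαβ⟩ := Nat.isCoprime_iff_coprime.mpr (hu.coprime_orderOf hp hv)
  refine ⟨β * orderOf v, ?_⟩
  have hv1 : v ^ (β * orderOf v) = 1 := by
    rw [mul_comm, zpow_mul, zpow_natCast, pow_orderOf_eq_one, one_zpow]
  have hu1 : u ^ (β * orderOf v) = u ^ (1 : ℤ) := by
    rw [zpow_eq_zpow_iff_modEq, Int.modEq_iff_dvd]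
    exact ⟨α, by linarith⟩
  simp only [hc.mul_zpow, hv1, hu1, mul_one, zpow_one]

end IsPElement

lemma exists_mul_eq_of_coprime {A B : ℕ} (hAB : A.Coprime B) (hg : orderOf g = A * B) :
    ∃ u ∈ zpowers g, ∃ v ∈ zpowers g, u * v = g ∧ orderOf u ∣ A ∧ orderOf v ∣ B := by
  obtain ⟨α, β, hαβ⟩ := Nat.isCoprime_iff_coprime.mpr hAB
  have hpow : ∀ m : ℤ, g ^ (m * (A * B : ℕ)) = 1 := fun m => by
    rw [mul_comm, zpow_mul, zpow_natCast, ← hg, pow_orderOf_eq_one, one_zpow]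
  refine ⟨g ^ (β * B), zpow_mem (mem_zpowers g) _, g ^ (α * A), zpow_mem (mem_zpowers g) _,
    ?_, orderOf_dvd_of_pow_eq_one ?_, orderOf_dvd_of_pow_eq_one ?_⟩
  · rw [← zpow_add, add_comm, hαβ, zpow_one]
  · rw [← zpow_natCast, ← zpow_mul, mul_assoc, ← Nat.cast_mul, mul_comm B, hpow]
  · rw [← zpow_natCast, ← zpow_mul, mul_assoc, ← Nat.cast_mul, hpow]

lemma exists_isPElement_mul_eq (hp : p.Prime) (hg : IsOfFinOrder g) :
    ∃ u ∈ zpowers g, ∃ v ∈ zpowers g, u * v = g ∧ IsPElement p u ∧ ¬ p ∣ orderOf v := by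
  have hn : orderOf g ≠ 0 := hg.orderOf_pos.ne'
  obtain ⟨u, hu, v, hv, huv, hAu, hBv⟩ := exists_mul_eq_of_coprime
    ((Nat.coprime_ordCompl hp hn).pow_left _) (Nat.ordProj_mul_ordCompl_eq_self _ p).symm
  exact ⟨u, hu, v, hv, huv, ⟨_, hAu⟩, fun hd => Nat.not_dvd_ordCompl hp hn (hd.trans hBv)⟩

lemma eq_of_isPElement_mul_eq (hp : p.Prime) {u v u' v' : G}
    (hu : IsPElement p u) (hv : ¬ p ∣ orderOf v) (hc : Commute u v)
    (hu' : IsPElement p u') (hv' : ¬ p ∣ orderOf v') (hc' : Commute u' v')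
    (h : u * v = u' * v') : u = u' ∧ v = v' := by
  have hmem := hu.mem_zpowers_mul hp hv hc
  have hvmem : v ∈ zpowers (u * v) := by simpa using mul_mem (inv_mem hmem) (mem_zpowers (u * v))
  have hmem' : u' ∈ zpowers (u * v) := h ▸ hu'.mem_zpowers_mul hp hv' hc'
  have hu'u : Commute u' u := setLike_mul_comm hmem' hmem
  have hu'v : Commute u' v := setLike_mul_comm hmem' hvmem
  have ht : (u'⁻¹ * u) * v = v' := by rw [mul_assoc, h, inv_mul_cancel_left]
  have ht1 : u'⁻¹ * u = 1 := (hu'.inv.mul hu'u.inv_left hu).eq_one_of_commute_mul hp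
    (hu'v.inv_left.mul_left hc) hv (ht ▸ hv')
  rw [inv_mul_eq_one] at ht1
  subst ht1
  exact ⟨rfl, mul_left_cancel h⟩

end PElement

section Counting

open Finset
open scoped Classical

variable {K : Type*} [Group K] [Fintype K] {p : ℕ}

lemma Subgroup.card_eq_card_toFinset (H : Subgroup K) : Nat.card H = (H : Set K).toFinset.card :=
  Nat.card_eq_card_toFinset (H : Set K)

lemma Finset.eq_of_sum_eq_of_le_one_add_mul {ι : Type*} {s : Finset ι} {t c : ι → ℕ} {a N : ℕ}
    (ha : 0 < a) (hN : ∑ i ∈ s, t i = N) (hlow : ∀ i ∈ s, a ≤ t i)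
    (hup : ∀ i ∈ s, t i ≤ 1 + c i * (a - 1)) (hc : a * ∑ i ∈ s, c i ≤ N) :
    ∀ i ∈ s, t i = a := by
  obtain ⟨b, rfl⟩ : ∃ b, a = b + 1 := ⟨a - 1, by omega⟩
  have hupper : N ≤ #s + b * ∑ i ∈ s, c i := by
    calc N = ∑ i ∈ s, t i := hN.symm
    _ ≤ ∑ i ∈ s, (1 + c i * b) := sum_le_sum fun i hi => by simpa using hup i hi
    _ = #s + b * ∑ i ∈ s, c i := by rw [sum_add_distrib, card_eq_sum_ones, mul_sum]; simp [mul_comm]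
  have hsum : ∑ i ∈ s, t i ≤ ∑ _i ∈ s, (b + 1) := by
    rw [hN, sum_const, smul_eq_mul]
    nlinarith [Nat.mul_le_mul_left (b + 1) hupper, Nat.mul_le_mul_left b hc]
  exact fun i hi => ((sum_eq_sum_iff_of_le hlow).mp (le_antisymm (sum_le_sum hlow) hsum) i hi).symm

theorem card_eq_sum_card_isPElement_mem_centralizer (hp : p.Prime) :
    Nat.card K = ∑ v : K with ¬ p ∣ orderOf v, #{u | IsPElement p u ∧ u ∈ centralizer {v}} := by
  rw [Nat.card_eq_fintype_card, ← card_univ, ← card_sigma]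
  symm
  refine card_bij (fun x _ => x.2 * x.1) (fun _ _ => mem_univ _) ?_ ?_
  · rintro ⟨v, u⟩ hvu ⟨v', u'⟩ hvu' h
    simp only [mem_sigma, mem_filter, mem_univ, true_and, mem_centralizer_singleton_iff]
      at hvu hvu'
    obtain ⟨rfl, rfl⟩ := eq_of_isPElement_mul_eq hp hvu.2.1 hvu.1 hvu.2.2 hvu'.2.1 hvu'.1 hvu'.2.2 h
    rfl
  · intro x _
    obtain ⟨u, hux, v, hvx, rfl, hu, hv⟩ := exists_isPElement_mul_eq hp (isOfFinOrder_of_finite x)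
    refine ⟨⟨v, u⟩, ?_, rfl⟩
    simp only [mem_sigma, mem_filter, mem_univ, true_and, mem_centralizer_singleton_iff]
    exact ⟨hv, hu, setLike_mul_comm hux hvx⟩

variable [Fact p.Prime]

lemma exists_sylow_le_of_not_dvd_index {C : Subgroup K} (hC : ¬ p ∣ C.index) {u : K}
    (huC : u ∈ C) (hu : IsPElement p u) : ∃ S : Sylow p K, (S : Subgroup K) ≤ C ∧ u ∈ S := by
  have hz : IsPGroup p (zpowers (⟨u, huC⟩ : C)) := by
    obtain ⟨k, hk⟩ := hu
    obtain ⟨j, -, hj⟩ := (Nat.dvd_prime_pow Fact.out).mp hk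
    exact IsPGroup.iff_card.mpr ⟨j, by rw [Nat.card_zpowers, Subgroup.orderOf_mk, hj]⟩
  obtain ⟨T, hT⟩ := hz.exists_le_sylow
  refine ⟨(T.isPGroup'.map C.subtype).toSylow ?_, map_subtype_le _,
    ⟨u, huC⟩, hT (mem_zpowers _), rfl⟩
  rw [index_map_subtype]
  exact fun hd => ((Nat.Prime.dvd_mul Fact.out).mp hd).elim T.not_dvd_index hC

lemma card_sylow_le_card_isPElement_mem {C : Subgroup K} (hC : ¬ p ∣ C.index) :
    p ^ (Nat.card K).factorization p ≤ #{u | IsPElement p u ∧ u ∈ C} := by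
  obtain ⟨S, hSC, -⟩ := exists_sylow_le_of_not_dvd_index hC (one_mem C) ⟨0, by simp⟩
  rw [← S.card_eq_multiplicity, Subgroup.card_eq_card_toFinset]
  refine card_le_card fun u hu => ?_
  rw [Set.mem_toFinset] at hu
  simp only [mem_filter, mem_univ, true_and]
  exact ⟨.of_mem_sylow hu, hSC hu⟩

lemma card_isPElement_mem_le {C : Subgroup K} (hC : ¬ p ∣ C.index) :
    #{u | IsPElement p u ∧ u ∈ C} ≤
      1 + #{S : Sylow p K | (S : Subgroup K) ≤ C} * (p ^ (Nat.card K).factorization p - 1) := by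
  have hsub : ({u | IsPElement p u ∧ u ∈ C} : Finset K) ⊆ insert 1
      ((univ.filter fun S : Sylow p K => (S : Subgroup K) ≤ C).biUnion
        fun S => ((S : Subgroup K) : Set K).toFinset.erase 1) := by
    intro u hu
    simp only [mem_filter, mem_univ, true_and] at hu
    rcases eq_or_ne u 1 with rfl | hu1
    · exact mem_insert_self _ _
    obtain ⟨S, hSC, huS⟩ := exists_sylow_le_of_not_dvd_index hC hu.2 hu.1
    exact mem_insert_of_mem (mem_biUnion.mpr ⟨S, by simpa using hSC, by simpa [hu1] using huS⟩)
  refine (card_le_card hsub).trans ((card_insert_le _ _).trans ?_)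
  rw [add_comm]
  gcongr
  refine card_biUnion_le.trans (sum_const_nat fun S _ => ?_).le
  rw [card_erase_of_mem (by simp), ← Subgroup.card_eq_card_toFinset, S.card_eq_multiplicity]

lemma card_sylow_mul_card_pRegular_mem_centralizer_le (S : Sylow p K) :
    p ^ (Nat.card K).factorization p * #{v | ¬ p ∣ orderOf v ∧ v ∈ centralizer (S : Set K)} ≤
      Nat.card (normalizer (S : Set K)) := by
  rw [← S.card_eq_multiplicity, Subgroup.card_eq_card_toFinset, ← card_product,
    Subgroup.card_eq_card_toFinset]
  refine card_le_card_of_injOn (fun x => x.1 * x.2) (fun x hx => ?_) ?_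
  · simp only [coe_product, Set.mem_prod, Set.coe_toFinset, coe_filter, mem_univ, true_and,
      SetLike.mem_coe] at hx ⊢
    exact mul_mem (le_normalizer hx.1) (centralizer_le_normalizer _ hx.2.2)
  · rintro ⟨s, v⟩ hsv ⟨s', v'⟩ hsv' h
    simp only [coe_product, Set.mem_prod, Set.coe_toFinset, coe_filter, mem_univ, true_and,
      SetLike.mem_coe] at hsv hsv' h
    have ht : (s'⁻¹ * s) * v = v' := by rw [mul_assoc, h, inv_mul_cancel_left]
    have hts : s'⁻¹ * s ∈ S := mul_mem (inv_mem hsv'.1) hsv.1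
    have hc : Commute (s'⁻¹ * s) v := mem_centralizer_iff.mp hsv.2.2 _ hts
    have ht1 := (IsPElement.of_mem_sylow hts).eq_one_of_commute_mul Fact.out hc hsv.2.1
      (ht ▸ hsv'.2.1)
    rw [inv_mul_eq_one] at ht1
    subst ht1
    simp [mul_left_cancel h]

lemma card_sylow_mul_sum_card_sylow_le_centralizer_le :
    p ^ (Nat.card K).factorization p * ∑ v : K with ¬ p ∣ orderOf v,
      #{S : Sylow p K | (S : Subgroup K) ≤ centralizer {v}} ≤ Nat.card K := by
  have hswap : ∑ v : K with ¬ p ∣ orderOf v, #{S : Sylow p K | (S : Subgroup K) ≤ centralizer {v}}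
      = ∑ S : Sylow p K, #{v | ¬ p ∣ orderOf v ∧ v ∈ centralizer (S : Set K)} := by
    have hmem (S : Sylow p K) (v : K) :
        (S : Subgroup K) ≤ centralizer {v} ↔ v ∈ centralizer (S : Set K) := by
      simp only [SetLike.le_def, mem_centralizer_iff, Set.mem_singleton_iff, forall_eq,
        SetLike.mem_coe]
      exact forall₂_congr fun _ _ => eq_comm
    simp only [card_filter]
    rw [sum_comm]
    refine sum_congr rfl fun S _ => ?_
    rw [sum_filter]
    exact sum_congr rfl fun v _ => by by_cases hv : p ∣ orderOf v <;> simp [hv, hmem]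
  have hnp : Nat.card (Sylow p K) ∣ Nat.card K := by
    obtain ⟨S⟩ : Nonempty (Sylow p K) := inferInstance
    exact S.card_eq_index_normalizer ▸ index_dvd_card _
  have hN (S : Sylow p K) :
      Nat.card (normalizer (S : Set K)) = Nat.card K / Nat.card (Sylow p K) := by
    rw [S.card_eq_index_normalizer, ← (normalizer (S : Set K)).index_mul_card,
      Nat.mul_div_cancel_left _ (Nat.pos_of_ne_zero index_ne_zero_of_finite)]
  calc _ = ∑ S : Sylow p K, p ^ (Nat.card K).factorization p *
        #{v | ¬ p ∣ orderOf v ∧ v ∈ centralizer (S : Set K)} := by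
        rw [hswap, mul_sum]
  _ ≤ ∑ S : Sylow p K, Nat.card (normalizer (S : Set K)) :=
        sum_le_sum fun S _ => card_sylow_mul_card_pRegular_mem_centralizer_le S
  _ = Nat.card K := by
        simp_rw [hN]
        rw [sum_const, card_univ, smul_eq_mul, ← Nat.card_eq_fintype_card, Nat.mul_div_cancel' hnp]

theorem Sylow.normal_of_forall_not_dvd_card_conjClass {K : Type*} [Group K] [Finite K] {p : ℕ}
    [Fact p.Prime] (h : ∀ x : K, ¬ p ∣ orderOf x → ¬ p ∣ Nat.card (conjClass K x))
    (P : Sylow p K) : (P : Subgroup K).Normal := by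
  cases nonempty_fintype K
  have hC (v : K) (hv : v ∈ ({v | ¬ p ∣ orderOf v} : Finset K)) : ¬ p ∣ (centralizer {v}).index :=
    card_conjClass_eq_index v ▸ h v (mem_filter.mp hv).2
  have hone :
      #{u | IsPElement p u ∧ u ∈ centralizer {(1 : K)}} = p ^ (Nat.card K).factorization p :=
    eq_of_sum_eq_of_le_one_add_mul (pow_pos (Fact.out : p.Prime).pos _)
      (card_eq_sum_card_isPElement_mem_centralizer Fact.out).symm
      (fun v hv => card_sylow_le_card_isPElement_mem (hC v hv))
      (fun v hv => card_isPElement_mem_le (hC v hv))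
      card_sylow_mul_sum_card_sylow_le_centralizer_le _
      (by simpa using (Fact.out : p.Prime).ne_one)
  have hS (S : Sylow p K) :
      ((S : Subgroup K) : Set K).toFinset = ({u | IsPElement p u} : Finset K) := by
    refine eq_of_subset_of_card_le (fun u hu => ?_) ?_
    · simpa using IsPElement.of_mem_sylow (Set.mem_toFinset.mp hu)
    · rw [← Subgroup.card_eq_card_toFinset, S.card_eq_multiplicity, ← hone]
      simp [mem_centralizer_singleton_iff]
  have : Subsingleton (Sylow p K) :=
    ⟨fun S T => Sylow.ext (SetLike.coe_injective (by simpa using (hS S).trans (hS T).symm))⟩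
  exact P.normal_of_subsingleton

end Counting

lemma Subgroup.relIndex_dvd_index_of_normal_right {G : Type*} [Group G] [Finite G]
    (H N : Subgroup G) [N.Normal] : H.relIndex N ∣ H.index := by
  have hsup : H.relIndex N = H.relIndex (H ⊔ N) := by
    have hpos : 0 < N.relIndex H := Nat.pos_of_ne_zero index_ne_zero_of_finite
    refine Nat.eq_of_mul_eq_mul_left hpos ?_
    calc N.relIndex H * H.relIndex N = (H ⊓ N).relIndex N * N.relIndex (H ⊔ N) := by
          rw [inf_relIndex_right, relIndex_sup_right, mul_comm]
    _ = (H ⊓ N).relIndex H * H.relIndex (H ⊔ N) := by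
          rw [relIndex_mul_relIndex _ _ _ inf_le_right le_sup_right,
            relIndex_mul_relIndex _ _ _ inf_le_left le_sup_left]
    _ = N.relIndex H * H.relIndex (H ⊔ N) := by rw [inf_relIndex_left]
  exact hsup ▸ relIndex_dvd_index_of_le le_sup_left

lemma exists_mem_zpowers_map_eq_not_dvd_orderOf {G H : Type*} [Group G] [Group H] {p : ℕ}
    (f : G →* H) (hp : p.Prime) {y : G} (hy : IsOfFinOrder y) (hfy : ¬ p ∣ orderOf (f y)) :
    ∃ x ∈ zpowers y, f x = f y ∧ ¬ p ∣ orderOf x := by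
  obtain ⟨u, hu, v, hv, huv, hpu, hpv⟩ := exists_isPElement_mul_eq hp hy
  have hfu : f u = 1 := by
    obtain ⟨j, hj⟩ := hpu
    refine IsPElement.eq_one hp ⟨j, (orderOf_map_dvd f u).trans hj⟩ fun hd => hfy (hd.trans ?_)
    obtain ⟨k, rfl⟩ := hu
    exact orderOf_dvd_of_mem_zpowers ⟨k, (map_zpow f y k).symm⟩
  exact ⟨v, hv, by rw [← huv, map_mul, hfu, one_mul], hpv⟩

def RegularClassSizesPrimeTo (p q : ℕ) (G : Type*) [Group G] : Prop :=
  ∀ x : G, ¬ p ∣ orderOf x → ¬ q ∣ orderOf x → ¬ q ∣ Nat.card (conjClass G x)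

namespace RegularClassSizesPrimeTo

variable {p q : ℕ} {G : Type*} [Group G]

lemma of_mulEquiv {H : Type*} [Group H] (e : G ≃* H) (h : RegularClassSizesPrimeTo p q G) :
    RegularClassSizesPrimeTo p q H := by
  intro y hyp hyq
  rw [← e.apply_symm_apply y, card_conjClass_map_mulEquiv]
  exact h _ (by rwa [e.symm.orderOf_eq]) (by rwa [e.symm.orderOf_eq])

lemma of_normal [Finite G] (h : RegularClassSizesPrimeTo p q G) (N : Subgroup G) [N.Normal] :
    RegularClassSizesPrimeTo p q N := by
  intro x hxp hxq hdvd
  refine h x (by rwa [orderOf_coe]) (by rwa [orderOf_coe]) ?_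
  have hcen : centralizer {x} = (centralizer {(x : G)}).subgroupOf N := by
    ext c
    simp only [mem_subgroupOf, mem_centralizer_singleton_iff, Subtype.ext_iff, coe_mul]
  rw [card_conjClass_eq_index, hcen] at hdvd
  rw [card_conjClass_eq_index]
  exact hdvd.trans (relIndex_dvd_index_of_normal_right _ N)

lemma of_quotient [Finite G] (hp : p.Prime) (hq : q.Prime) (h : RegularClassSizesPrimeTo p q G)
    (N : Subgroup G) [N.Normal] : RegularClassSizesPrimeTo p q (G ⧸ N) := by
  intro y' hyp hyq hdvd
  obtain ⟨y, rfl⟩ := QuotientGroup.mk'_surjective N y'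
  obtain ⟨x₁, -, hx₁, hx₁p⟩ :=
    exists_mem_zpowers_map_eq_not_dvd_orderOf _ hp (isOfFinOrder_of_finite y) hyp
  obtain ⟨x, hxx₁, hx, hxq⟩ :=
    exists_mem_zpowers_map_eq_not_dvd_orderOf _ hq (isOfFinOrder_of_finite x₁) (hx₁ ▸ hyq)
  refine h x (fun hd => hx₁p (hd.trans (orderOf_dvd_of_mem_zpowers hxx₁))) hxq ?_
  rw [← hx₁, ← hx, card_conjClass_eq_index,
    ← index_comap_of_surjective _ (QuotientGroup.mk'_surjective N)] at hdvd
  rw [card_conjClass_eq_index]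
  refine hdvd.trans (index_dvd_of_le fun c hc => ?_)
  rw [mem_centralizer_singleton_iff] at hc
  rw [mem_comap, mem_centralizer_singleton_iff, ← map_mul, ← map_mul, hc]

lemma of_le [Finite G] {K L : Subgroup G} (hKL : K ≤ L) [(K.subgroupOf L).Normal]
    (h : RegularClassSizesPrimeTo p q L) : RegularClassSizesPrimeTo p q K :=
  (h.of_normal (K.subgroupOf L)).of_mulEquiv (subgroupOfEquivOfLe hKL)

end RegularClassSizesPrimeTo

lemma IsPiNumber.mono {π π' : Set ℕ} (h : π ⊆ π') {n : ℕ} (hn : IsPiNumber π n) :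
    IsPiNumber π' n :=
  fun q hq hqn => h (hn q hq hqn)

section Series

variable {G : Type*} [Group G]

def IsPiSepFactor (π : Set ℕ) (K L : Subgroup G) : Prop :=
  (K.subgroupOf L).Normal ∧
    (IsPiNumber π (Nat.card (L ⧸ K.subgroupOf L)) ∨
      IsPiNumber {q | q ∉ π} (Nat.card (L ⧸ K.subgroupOf L)))

def HasPiSepSeries (π : Set ℕ) (L : Subgroup G) : Prop :=
  ∃ (n : ℕ) (H : Fin (n + 1) → Subgroup G), Monotone H ∧ H 0 = ⊥ ∧ H (Fin.last n) = L ∧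
    ∀ i : Fin n, IsPiSepFactor π (H i.castSucc) (H i.succ)

variable {π : Set ℕ}

lemma isPiSeparable_iff_hasPiSepSeries_top :
    IsPiSeparable π G ↔ HasPiSepSeries π (⊤ : Subgroup G) :=
  Iff.rfl

lemma hasPiSepSeries_bot : HasPiSepSeries π (⊥ : Subgroup G) :=
  ⟨0, fun _ => ⊥, monotone_const, rfl, rfl, Fin.elim0⟩

lemma HasPiSepSeries.snoc {K L : Subgroup G} (hK : HasPiSepSeries π K) (hKL : K ≤ L)
    (hfac : IsPiSepFactor π K L) : HasPiSepSeries π L := by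
  obtain ⟨n, H, hmono, hbot, htop, hstep⟩ := hK
  refine ⟨n + 1, Fin.snoc H L, Fin.monotone_iff_le_succ.mpr fun i => ?_, ?_, by simp, fun i => ?_⟩
  · induction i using Fin.lastCases with
    | last => simpa [htop] using hKL
    | cast j =>
      rw [Fin.succ_castSucc, Fin.snoc_castSucc, Fin.snoc_castSucc]
      exact hmono j.castSucc_le_succ
  · simpa using hbot
  · induction i using Fin.lastCases with
    | last => simpa [htop] using hfac
    | cast j =>
      rw [Fin.succ_castSucc, Fin.snoc_castSucc, Fin.snoc_castSucc]
      exact hstep j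

lemma isPiSepFactor_of_ker_eq {K L : Subgroup G} {X : Type*} [Group X] (f : L →* X)
    (hker : f.ker = K.subgroupOf L)
    (hrange : IsPiNumber π (Nat.card f.range) ∨ IsPiNumber {q | q ∉ π} (Nat.card f.range)) :
    IsPiSepFactor π K L := by
  refine ⟨hker ▸ f.normal_ker, ?_⟩
  rwa [← hker, Nat.card_congr (QuotientGroup.quotientKerEquivRange f).toEquiv]

lemma Subgroup.map_subtype_subgroupOf {L : Subgroup G} (H : Subgroup L) :
    (H.map L.subtype).subgroupOf L = H :=
  comap_map_eq_self_of_injective L.subtype_injective H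

variable {K L : Subgroup G} [(K.subgroupOf L).Normal]

lemma isPiSepFactor_map_comap_left (Q : Subgroup (L ⧸ K.subgroupOf L))
    (hQ : IsPiNumber π (Nat.card Q) ∨ IsPiNumber {q | q ∉ π} (Nat.card Q)) :
    IsPiSepFactor π K ((Q.comap (QuotientGroup.mk' (K.subgroupOf L))).map L.subtype) := by
  have hML : (Q.comap (QuotientGroup.mk' (K.subgroupOf L))).map L.subtype ≤ L := map_subtype_le _
  refine isPiSepFactor_of_ker_eq ((QuotientGroup.mk' (K.subgroupOf L)).comp (inclusion hML)) ?_ ?_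
  · ext m
    simp [mem_subgroupOf, QuotientGroup.eq_one_iff]
  · rwa [MonoidHom.range_comp, inclusion_range, Subgroup.map_subtype_subgroupOf,
      map_comap_eq_self_of_surjective (QuotientGroup.mk'_surjective _)]

lemma isPiSepFactor_map_comap_right (Q : Subgroup (L ⧸ K.subgroupOf L)) [Q.Normal]
    (hQ : IsPiNumber π (Nat.card (_ ⧸ Q)) ∨ IsPiNumber {q | q ∉ π} (Nat.card (_ ⧸ Q))) :
    IsPiSepFactor π ((Q.comap (QuotientGroup.mk' (K.subgroupOf L))).map L.subtype) L := by
  set f := (QuotientGroup.mk' Q).comp (QuotientGroup.mk' (K.subgroupOf L))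
  have hsurj : Function.Surjective f :=
    (QuotientGroup.mk'_surjective Q).comp (QuotientGroup.mk'_surjective _)
  refine isPiSepFactor_of_ker_eq f ?_ ?_
  · rw [← MonoidHom.comap_ker, QuotientGroup.ker_mk']
    exact (Subgroup.map_subtype_subgroupOf _).symm
  · rwa [MonoidHom.range_eq_top_of_surjective f hsurj, card_top]

end Series

lemma HasPiSepSeries.extend {G : Type*} [Group G] [Finite G] {p q : ℕ} (hp : p.Prime)
    (hq : q.Prime) {K L : Subgroup G} (hK : HasPiSepSeries {p, q} K) (hKL : K ≤ L)
    (hfac : IsPiSepFactor {p} K L) (hL : RegularClassSizesPrimeTo p q L) :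
    HasPiSepSeries {p, q} L := by
  obtain ⟨hnormal, hpfac | hp'fac⟩ := hfac
  · exact hK.snoc hKL ⟨hnormal, .inl (hpfac.mono (by simp))⟩
  have := Fact.mk hq
  set F := L ⧸ K.subgroupOf L
  have hpF (x : F) : ¬ p ∣ orderOf x := fun hd => by
    simpa using hp'fac p hp (hd.trans (orderOf_dvd_natCard x))
  obtain ⟨P⟩ : Nonempty (Sylow q F) := inferInstance
  have : (P : Subgroup F).Normal :=
    P.normal_of_forall_not_dvd_card_conjClass fun x => hL.of_quotient hp hq _ x (hpF x)
  have hKM : K ≤ ((P : Subgroup F).comap (QuotientGroup.mk' (K.subgroupOf L))).map L.subtype :=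
    fun x hx => ⟨⟨x, hKL hx⟩, by
      rw [SetLike.mem_coe, mem_comap, QuotientGroup.mk'_apply,
        (QuotientGroup.eq_one_iff _).mpr (mem_subgroupOf.mpr hx)]
      exact one_mem _, rfl⟩
  refine (hK.snoc hKM (isPiSepFactor_map_comap_left _ (.inl fun r hr hrd => ?_))).snoc
    (map_subtype_le _) (isPiSepFactor_map_comap_right _ (.inr fun r hr hrd => ?_))
  · rw [P.card_eq_multiplicity] at hrd
    simp [(Nat.prime_dvd_prime_iff_eq hr hq).mp (hr.dvd_of_dvd_pow hrd)]
  · have hrq : r ≠ q := fun h => P.not_dvd_index (h ▸ hrd)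
    have hrp : r ≠ p := fun h => by
      simpa using hp'fac p hp (h ▸ hrd.trans (P : Subgroup F).index_dvd_card)
    simp [hrp, hrq]

theorem stmt15 {G : Type*} [Group G] [Fintype G] {p q : ℕ} (hp : p.Prime) (hq : q.Prime)
    (hsep : IsPiSeparable {p} G)
    (h : ∀ x : G, ¬ p ∣ orderOf x → ¬ q ∣ orderOf x → ¬ q ∣ Nat.card ↥(conjClass G x)) :
    IsPiSeparable {p, q} G := by
  obtain ⟨n, H, hmono, hbot, htop, hfac⟩ := hsep
  have hH (j : Fin (n + 1)) : RegularClassSizesPrimeTo p q (H j) := by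
    induction j using Fin.reverseInduction with
    | last => exact htop ▸ RegularClassSizesPrimeTo.of_mulEquiv topEquiv.symm h
    | cast i ih =>
      have := (hfac i).1
      exact ih.of_le (hmono i.castSucc_le_succ)
  have hseries (j : Fin (n + 1)) : HasPiSepSeries {p, q} (H j) := by
    induction j using Fin.induction with
    | zero => exact hbot ▸ hasPiSepSeries_bot
    | succ i ih => exact ih.extend hp hq (hmono i.castSucc_le_succ) (hfac i) (hH i.succ)
  rw [isPiSeparable_iff_hasPiSepSeries_top, ← htop]
  exact hseries (Fin.last n)
end
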